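/- Let 0 → A → O_{P^1}^n → B → 0 be a short exact sequence of sheaves on P^1 with B torsion of degree d, and suppose the image of the induced map H^0(P^1, O^n) → H^0(P^1, B) has dimension at least 2. Then writing A = ⊕_{i=1}^n O(d_i), every d_i ≥ -(d-1). -/
import Mathlib

/- STATEMENT 1:
Let 0 → A → O_{P^1}^n → B → 0 be exact with B torsion of degree d, and suppose the image of
H^0(O^n) → H^0(B) has dimension ≥ 2.  Writing A = ⊕ O(d_i), every d_i ≥ -(d-1).

Encoding: A = ⊕_{i=1}^n O(d_i) with each d_i ≤ 0 and ∑ d_i = -d (kernel of a surjection onto a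
torsion sheaf of degree d).  From the exact sequence H^0(O^n) → H^0(B) → H^1(A) → 0 with
h^0(B) = d and h^1(A) = ∑ max(0, -1-d_i), the dimension of the image equals
d - ∑ (-1 - d_i).toNat, and the hypothesis is that this is at least 2. -/
theorem stmt1 (n d : ℕ) (hd : 0 < d) (ds : Fin n → ℤ)
    (hle : ∀ i, ds i ≤ 0)
    (hdeg : ∑ i, ds i = -(d : ℤ))
    (himg : 2 ≤ (d : ℤ) - ∑ i, ((-1 - ds i).toNat : ℤ)) :
    ∀ i, -((d : ℤ) - 1) ≤ ds i := by
  intro i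
  by_contra h
  push_neg at h
  have hi : (d : ℤ) - 1 ≤ ((-1 - ds i).toNat : ℤ) := by
    rw [Int.toNat_of_nonneg (by omega)]
    omega
  have hsum : ((-1 - ds i).toNat : ℤ) ≤ ∑ j, ((-1 - ds j).toNat : ℤ) :=
    Finset.single_le_sum (f := fun j => ((-1 - ds j).toNat : ℤ)) (fun j _ => by positivity) (Finset.mem_univ i)
  omega
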